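/- Let G be the graph on 10 vertices obtained from the triangular prism by subdividing one non-triangular edge four times (replacing it by a path through four new vertices). Then the complement cG contains a K_{3,3,1,1} minor. -/
import Mathlib


/-- `H` is a minor of `G`: there are pairwise disjoint nonempty branch sets in `G`,
one for each vertex of `H`, each inducing a connected subgraph, such that every edge
of `H` is realized by an edge of `G` between the corresponding branch sets. -/
def SimpleGraph.HasMinor {α β : Type*} (G : SimpleGraph α) (H : SimpleGraph β) : Prop :=
  ∃ f : β → Set α,
    (∀ b, (f b).Nonempty) ∧
    (∀ b, (G.induce (f b)).Connected) ∧
    (∀ b b', b ≠ b' → Disjoint (f b) (f b')) ∧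
    (∀ b b', H.Adj b b' → ∃ a ∈ f b, ∃ a' ∈ f b', G.Adj a a')
/-- The complete 4-partite graph `K_{3,3,1,1}`. -/
def K3311 : SimpleGraph ((i : Fin 4) × ![Fin 3, Fin 3, Fin 1, Fin 1] i) :=
  SimpleGraph.completeMultipartiteGraph ![Fin 3, Fin 3, Fin 1, Fin 1]

/-- The graph on 10 vertices obtained from the triangular prism (triangles
`v1v3v5 = {0,2,4}`, `v2v4v6 = {1,3,5}`, edges `v3v4 = (2,3)`, `v5v6 = (4,5)`) by
subdividing the edge `v1v2` four times, via the path `v1–a–b–c–d–v2 = 0–6–7–8–9–1`. -/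
def prismD : SimpleGraph (Fin 10) :=
  SimpleGraph.fromRel (fun i j =>
    ((i, j) : Fin 10 × Fin 10) ∈
      ([(0, 2), (2, 4), (0, 4), (1, 3), (3, 5), (1, 5),
        (2, 3), (4, 5), (0, 6), (6, 7), (7, 8), (8, 9), (9, 1)] : List (Fin 10 × Fin 10)))

/-- The branch sets (as lists) of the `K_{3,3,1,1}` minor in `prismDᶜ`:
part 0 ↦ `{0,1}, {6}, {7}`, part 1 ↦ `{2}, {3}, {4}`, part 2 ↦ `{5,8}`, part 3 ↦ `{9}`. -/
def branchList : (b : (i : Fin 4) × ![Fin 3, Fin 3, Fin 1, Fin 1] i) → List (Fin 10)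
  | ⟨⟨0, _⟩, j⟩ => ![([0, 1] : List (Fin 10)), [6], [7]] j
  | ⟨⟨1, _⟩, j⟩ => ![([2] : List (Fin 10)), [3], [4]] j
  | ⟨⟨2, _⟩, _⟩ => [5, 8]
  | ⟨⟨3, _⟩, _⟩ => [9]
  | ⟨⟨_ + 4, h⟩, _⟩ => absurd h (by omega)

/-- Case analysis over the eight vertices of `K_{3,3,1,1}`. -/
lemma sigma_cases {P : ((i : Fin 4) × ![Fin 3, Fin 3, Fin 1, Fin 1] i) → Prop}
    (h00 : P ⟨0, (0 : Fin 3)⟩) (h01 : P ⟨0, (1 : Fin 3)⟩) (h02 : P ⟨0, (2 : Fin 3)⟩)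
    (h10 : P ⟨1, (0 : Fin 3)⟩) (h11 : P ⟨1, (1 : Fin 3)⟩) (h12 : P ⟨1, (2 : Fin 3)⟩)
    (h2 : P ⟨2, (0 : Fin 1)⟩) (h3 : P ⟨3, (0 : Fin 1)⟩) : ∀ b, P b := by
  rintro ⟨⟨(_ | _ | _ | _ | i), hi⟩, j⟩
  · rcases j with ⟨(_ | _ | _ | j), hj⟩
    · exact h00
    · exact h01
    · exact h02
    · omega
  · rcases j with ⟨(_ | _ | _ | j), hj⟩
    · exact h10
    · exact h11
    · exact h12
    · omega
  · rcases j with ⟨(_ | j), hj⟩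
    · exact h2
    · omega
  · rcases j with ⟨(_ | j), hj⟩
    · exact h3
    · omega
  · omega

instance : DecidableRel prismD.Adj := fun a b => by
  unfold prismD; rw [SimpleGraph.fromRel_adj]; infer_instance

/-- A nonempty graph in which all distinct vertices are adjacent is connected. -/
lemma conn_of_complete {V : Type*} [DecidableEq V] (G : SimpleGraph V)
    (hne : Nonempty V) (h : ∀ u v : V, u ≠ v → G.Adj u v) : G.Connected := by
  rw [SimpleGraph.connected_iff]
  exact ⟨fun u v => if huv : u = v then huv ▸ SimpleGraph.Reachable.refl u
    else (h u v huv).reachable, hne⟩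

/-- The complement of the elongated prism obtained by subdividing one non-triangular
edge four times contains a `K_{3,3,1,1}` minor. -/
theorem prismD_compl_K3311_minor : prismDᶜ.HasMinor K3311 := by
  refine ⟨fun b => {v | v ∈ branchList b}, ?_, ?_, ?_, ?_⟩
  · apply sigma_cases <;> exact ⟨_, List.head_mem (by decide)⟩
  · apply sigma_cases <;>
      exact conn_of_complete _ ⟨⟨_, List.head_mem (by decide)⟩⟩ (by decide)
  · apply sigma_cases <;> apply sigma_cases <;>
      (intro hne; first
        | exact absurd rfl hne
        | (rw [Set.disjoint_left]; intro a ha hb; revert hb; revert ha; revert a; decide))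
  · apply sigma_cases <;> apply sigma_cases <;>
      (intro h; first | exact absurd rfl h | decide)
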